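/- arXiv:2305.14626 — 5 statements merged into one kernel-verified Lean document; each statement's English description precedes it below -/
import Mathlib

section
/- Let F, G : A → B be additive functors between abelian categories with A having enough projectives and F right exact, and let α be a natural transformation F|_Proj → G|_Proj on projectives. For any object X of A, any epimorphism p : P → X with P projective, there exists a unique morphism ᾱ_X : F(X) → G(X) such that ᾱ_X ∘ F(p) = G(p) ∘ α_P; moreover ᾱ_X does not depend on the choice of p. -/
open CategoryTheory CategoryTheory.Limits

/-!
In an abelian category an epimorphism `p : P ⟶ X` is the cokernel of `kernel.ι p`, so for right
exact `F` the map `F p` is the cokernel of `F (kernel.ι p)`. Covering `kernel p` by a projective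
and applying naturality of `α` there shows that `α_P ≫ G p` kills `F (kernel.ι p)`, hence descends
uniquely along `F p`. Any other `p' : P' ⟶ X` from a projective lifts through `p`, and naturality
of `α` along the lift shows that the descended map also satisfies the equation for `p'`.
-/

namespace CategoryTheory

variable {A B : Type*} [Category A] [Category B]

lemma ObjectProperty.naturality_of_ι_comp {S : ObjectProperty A} {F G : A ⥤ B}
    (α : S.ι ⋙ F ⟶ S.ι ⋙ G) {P Q : A} (hP : S P) (hQ : S Q) (h : P ⟶ Q) :
    F.map h ≫ α.app ⟨Q, hQ⟩ = α.app ⟨P, hP⟩ ≫ G.map h :=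
  α.naturality (X := ⟨P, hP⟩) (Y := ⟨Q, hQ⟩) (ObjectProperty.homMk h)

lemma Abelian.existsUnique_map_comp_eq_of_epi [Abelian A] [HasZeroMorphisms B] (F : A ⥤ B)
    [F.PreservesZeroMorphisms] [PreservesFiniteColimits F] {P X : A} (p : P ⟶ X) [Epi p]
    {Y : B} (φ : F.obj P ⟶ Y) (hφ : F.map (kernel.ι p) ≫ φ = 0) :
    ∃! f : F.obj X ⟶ Y, F.map p ≫ f = φ :=
  Cofork.IsColimit.existsUnique
    (CokernelCofork.mapIsColimit _ (Abelian.epiIsCokernelOfKernel _ (limit.isLimit _)) F) φ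
    (by simpa using hφ)

section Projectives

variable {F G : A ⥤ B} (α : ObjectProperty.ι (fun X : A => Projective X) ⋙ F ⟶
    ObjectProperty.ι (fun X : A => Projective X) ⋙ G)

lemma map_comp_app_comp_map_eq_zero [HasZeroMorphisms A] [HasZeroMorphisms B]
    [G.PreservesZeroMorphisms] {P Q X : A} (hP : Projective P) (hQ : Projective Q)
    (d : Q ⟶ P) (p : P ⟶ X) (hdp : d ≫ p = 0) :
    F.map d ≫ α.app ⟨P, hP⟩ ≫ G.map p = 0 := by
  rw [← Category.assoc, ObjectProperty.naturality_of_ι_comp α hQ hP, Category.assoc,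
    ← G.map_comp, hdp, G.map_zero, comp_zero]

lemma map_kernelι_comp_app_comp_map_eq_zero [Abelian A] [HasZeroMorphisms B]
    [EnoughProjectives A] [F.PreservesEpimorphisms] [G.PreservesZeroMorphisms]
    {P X : A} (hP : Projective P) (p : P ⟶ X) :
    F.map (kernel.ι p) ≫ α.app ⟨P, hP⟩ ≫ G.map p = 0 := by
  rw [← cancel_epi (F.map (Projective.π (kernel p))), comp_zero, ← F.map_comp_assoc]
  exact map_comp_app_comp_map_eq_zero α hP (Projective.projective_over _) _ p (by simp)

lemma map_comp_eq_app_comp_map_of_epi {P Q X : A} (hP : Projective P) (hQ : Projective Q)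
    (p : P ⟶ X) (q : Q ⟶ X) [Epi q] {g : F.obj X ⟶ G.obj X}
    (hg : F.map q ≫ g = α.app ⟨Q, hQ⟩ ≫ G.map q) :
    F.map p ≫ g = α.app ⟨P, hP⟩ ≫ G.map p := by
  rw [← Projective.factorThru_comp p q, F.map_comp, Category.assoc, hg, ← Category.assoc,
    ObjectProperty.naturality_of_ι_comp α hP hQ, Category.assoc, ← G.map_comp]

end Projectives

end CategoryTheory

theorem exists_unique_extension_at_object_general
    {A B : Type*} [Category A] [Category B] [Abelian A] [Abelian B]
    [EnoughProjectives A]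
    (F G : A ⥤ B) [G.Additive] [PreservesFiniteColimits F]
    (α : ObjectProperty.ι (fun X : A => Projective X) ⋙ F ⟶
         ObjectProperty.ι (fun X : A => Projective X) ⋙ G)
    (X : A) :
    (∀ (P : A) (hP : Projective P) (p : P ⟶ X), Epi p →
        ∃! f : F.obj X ⟶ G.obj X, F.map p ≫ f = α.app ⟨P, hP⟩ ≫ G.map p) ∧
    (∀ (P Q : A) (hP : Projective P) (hQ : Projective Q)
        (p : P ⟶ X) (q : Q ⟶ X), Epi p → Epi q →
        ∀ f g : F.obj X ⟶ G.obj X,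
          F.map p ≫ f = α.app ⟨P, hP⟩ ≫ G.map p →
          F.map q ≫ g = α.app ⟨Q, hQ⟩ ≫ G.map q → f = g) := by
  have existsUnique (P : A) (hP : Projective P) (p : P ⟶ X) (_ : Epi p) :
      ∃! f : F.obj X ⟶ G.obj X, F.map p ≫ f = α.app ⟨P, hP⟩ ≫ G.map p :=
    Abelian.existsUnique_map_comp_eq_of_epi F p _
      (map_kernelι_comp_app_comp_map_eq_zero α hP p)
  refine ⟨existsUnique, fun P Q hP hQ p q hp hq f g hf hg => ?_⟩
  exact (existsUnique P hP p hp).unique hf (map_comp_eq_app_comp_map_of_epi α hP hQ p q hg)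

/-- Given additive functors `F, G : A ⥤ B` between abelian categories with
`A` having enough projectives, `F` right exact, and a natural transformation `α` defined on
the full subcategory of projectives, then for any object `X` and any epimorphism
`p : P ⟶ X` with `P` projective there is a unique morphism `ᾱ_X : F X ⟶ G X` with
`ᾱ_X ∘ F p = G p ∘ α_P`; moreover `ᾱ_X` is independent of the choice of `p`. -/
theorem exists_unique_extension_at_object
    {A B : Type*} [Category A] [Category B] [Abelian A] [Abelian B]
    [EnoughProjectives A]
    (F G : A ⥤ B) [F.Additive] [G.Additive] [PreservesFiniteColimits F]
    (α : ObjectProperty.ι (fun X : A => Projective X) ⋙ F ⟶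
         ObjectProperty.ι (fun X : A => Projective X) ⋙ G)
    (X : A) :
    (∀ (P : A) (hP : Projective P) (p : P ⟶ X), Epi p →
        ∃! f : F.obj X ⟶ G.obj X, F.map p ≫ f = α.app ⟨P, hP⟩ ≫ G.map p) ∧
    (∀ (P Q : A) (hP : Projective P) (hQ : Projective Q)
        (p : P ⟶ X) (q : Q ⟶ X), Epi p → Epi q →
        ∀ f g : F.obj X ⟶ G.obj X,
          F.map p ≫ f = α.app ⟨P, hP⟩ ≫ G.map p →
          F.map q ≫ g = α.app ⟨Q, hQ⟩ ≫ G.map q → f = g) :=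
  exists_unique_extension_at_object_general F G α X
end

section
/- Let H be a finite dimensional Hopf algebra over k, λ a right integral on H with λ(Λ)=1 for a left cointegral Λ, and α_H the distinguished grouplike element of H*. Then for all a, b ∈ H: λ(ab) = α_H(S(b₍₁₎)) λ(S²(b₍₂₎) a). -/
/-!
Let `P = (id ⊗ S)(Δ Λ) = ∑ Λ₁ ⊗ S Λ₂`. As `Λ` is a left cointegral, `(x ⊗ 1) P = P (1 ⊗ x)`;
slicing with `λ` turns this into Fourier inversion `∑ λ(x Λ₁) S Λ₂ = x`. So `λ` is nondegenerate,
and since `λ(z ∑ λ(S Λ₂) Λ₁) = λ(z)` for all `z`, also `∑ λ(S Λ₂) Λ₁ = 1`.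

From `Λ S(h) = α(h) Λ`, the map `α` is multiplicative and `∑ α(b₁) Δ Λ (b₂ ⊗ 1) = Δ Λ (1 ⊗ S b)`;
convolving with `α ∘ S = α⁻¹` gives `Δ Λ (b ⊗ 1) = ∑ α(S b₁) Δ Λ (1 ⊗ S b₂)`. Apply `id ⊗ S` and
then `u ⊗ v ↦ λ(a u) λ(v)`: the left side becomes `λ(a b)` by the second identity, and each summand
on the right becomes `λ(S²(b₂) a)` by Fourier inversion.

Coassociativity enters only as associativity of convolution in `Hom(H, H ⊗ H)`. There
`Δ = ι₁ ⋆ ι₂` for the inclusions `ι₁, ι₂ : H → H ⊗ H`, whose inverses are `ι₁ ∘ S` and `ι₂ ∘ S`,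
so `Δ ∘ S = (ι₂ ∘ S) ⋆ (ι₁ ∘ S)`, i.e. `Δ(S b) = S b₂ ⊗ S b₁`.
-/

open Coalgebra TensorProduct HopfAlgebra WithConv

namespace TensorProduct

variable {R : Type*} [CommSemiring R]

section Algebra

variable {H : Type*} [Semiring H] [Algebra R H] (φ : H →ₗ[R] R) (t : H ⊗[R] H)

lemma lid_rTensor_mul_one_tmul (y : H) :
    TensorProduct.lid R H (φ.rTensor H (t * (1 ⊗ₜ y))) =
      TensorProduct.lid R H (φ.rTensor H t) * y := by
  induction t using TensorProduct.induction_on with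
  | zero => simp
  | tmul u v => simp
  | add u v hu hv => simp [add_mul, hu, hv]

lemma lid_rTensor_one_tmul_mul (y : H) :
    TensorProduct.lid R H (φ.rTensor H ((1 ⊗ₜ y) * t)) =
      y * TensorProduct.lid R H (φ.rTensor H t) := by
  induction t using TensorProduct.induction_on with
  | zero => simp
  | tmul u v => simp
  | add u v hu hv => simp [mul_add, hu, hv]

lemma lid_rTensor_tmul_one_mul (z : H) :
    TensorProduct.lid R H (φ.rTensor H ((z ⊗ₜ 1) * t)) =
      TensorProduct.lid R H ((φ ∘ₗ LinearMap.mulLeft R z).rTensor H t) := by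
  induction t using TensorProduct.induction_on with
  | zero => simp
  | tmul u v => simp
  | add u v hu hv => simp [mul_add, hu, hv]

lemma lid_rTensor_mul_tmul_one (z : H) :
    TensorProduct.lid R H (φ.rTensor H (t * (z ⊗ₜ 1))) =
      TensorProduct.lid R H ((φ ∘ₗ LinearMap.mulRight R z).rTensor H t) := by
  induction t using TensorProduct.induction_on with
  | zero => simp
  | tmul u v => simp
  | add u v hu hv => simp [add_mul, hu, hv]

end Algebra

variable {M N : Type*} [AddCommMonoid M] [Module R M] [AddCommMonoid N] [Module R N]
  (φ : M →ₗ[R] R) (t : M ⊗[R] N)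

lemma lid_rTensor_lTensor (f : N →ₗ[R] N) :
    TensorProduct.lid R N (φ.rTensor N (f.lTensor M t)) =
      f (TensorProduct.lid R N (φ.rTensor N t)) := by
  induction t using TensorProduct.induction_on with
  | zero => simp
  | tmul u v => simp
  | add u v hu hv => simp [hu, hv]

lemma apply_lid_rTensor (ψ : N →ₗ[R] R) :
    ψ (TensorProduct.lid R N (φ.rTensor N t)) = φ (TensorProduct.rid R M (ψ.lTensor M t)) := by
  induction t using TensorProduct.induction_on with
  | zero => simp
  | tmul u v => simp [mul_comm]
  | add u v hu hv => simp [hu, hv]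

end TensorProduct

namespace HopfAlgebra

section General

variable {R H B : Type*} [CommSemiring R] [Semiring H] [HopfAlgebra R H] [Semiring B]
  [Algebra R B]

variable (R) in
def IsLeftCointegral (Λ : H) : Prop := ∀ h : H, h * Λ = counit (R := R) h • Λ

def IsRightIntegral (lam : H →ₗ[R] R) : Prop :=
  ∀ h : H, TensorProduct.lid R H (lam.rTensor H (comul (R := R) h)) = lam h • (1 : H)

local notation "ι₁" =>
  AlgHom.toLinearMap (Algebra.TensorProduct.includeLeft (R := R) (S := R) (A := H) (B := H))
local notation "ι₂" =>
  AlgHom.toLinearMap (Algebra.TensorProduct.includeRight (R := R) (A := H) (B := H))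

lemma algHom_comp_antipode_convMul_self (f : H →ₐ[R] B) :
    toConv (f.toLinearMap ∘ₗ antipode R) * toConv f.toLinearMap = 1 := by
  ext x
  simp [(ℛ R x).convMul_apply, ← map_mul, ← map_sum, sum_antipode_mul_eq_algebraMap_counit]

lemma includeLeft_convMul_includeRight : toConv ι₁ * toConv ι₂ = toConv (comul (R := R)) := by
  ext x
  simp [(ℛ R x).convMul_apply, (ℛ R x).eq]

lemma comul_comp_antipode :
    toConv (comul ∘ₗ antipode R) = toConv (ι₂ ∘ₗ antipode R) * toConv (ι₁ ∘ₗ antipode R) := by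
  refine (left_inv_eq_right_inv ?_ LinearMap.comul_right_inv).symm
  rw [← includeLeft_convMul_includeRight, mul_assoc, ← mul_assoc _ (toConv ι₁),
    algHom_comp_antipode_convMul_self, one_mul, algHom_comp_antipode_convMul_self]

lemma comul_comp_antipode_convMul_includeLeft :
    toConv (comul ∘ₗ antipode R) * toConv ι₁ = toConv (ι₂ ∘ₗ antipode R) := by
  rw [comul_comp_antipode, mul_assoc, algHom_comp_antipode_convMul_self, mul_one]

lemma lTensor_antipode_tmul_mul (u v : H) (t : H ⊗[R] H) :
    (antipode R).lTensor H ((u ⊗ₜ v) * t) =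
      (u ⊗ₜ 1) * (antipode R).lTensor H t * (1 ⊗ₜ antipode R v) := by
  induction t using TensorProduct.induction_on with
  | zero => simp
  | tmul x y => simp [antipode_mul_antidistrib]
  | add x y hx hy => simp [mul_add, add_mul, hx, hy]

lemma lTensor_antipode_mul_tmul (u v : H) (t : H ⊗[R] H) :
    (antipode R).lTensor H (t * (u ⊗ₜ v)) =
      (1 ⊗ₜ antipode R v) * (antipode R).lTensor H t * (u ⊗ₜ 1) := by
  induction t using TensorProduct.induction_on with
  | zero => simp
  | tmul x y => simp [antipode_mul_antidistrib]
  | add x y hx hy => simp [mul_add, add_mul, hx, hy]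

variable {Λ : H}

theorem tmul_one_mul_lTensor_antipode_comul (hΛ : IsLeftCointegral R Λ) (x : H) :
    (x ⊗ₜ[R] 1) * (antipode R).lTensor H (comul Λ) =
      (antipode R).lTensor H (comul Λ) * (1 ⊗ₜ x) := by
  generalize hP : (antipode R).lTensor H (comul (R := R) Λ) = P
  have hP_conv : toConv (LinearMap.mulRight R P ∘ₗ ι₁) * toConv (ι₂ ∘ₗ antipode R) =
      toConv ((counit : H →ₗ[R] R).smulRight P) := by
    ext y
    have : (antipode R).lTensor H (comul (R := R) y * comul Λ) = counit (R := R) y • P := by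
      rw [← Bialgebra.comul_mul, hΛ, map_smul, map_smul, hP]
    simpa [← (ℛ R y).eq, (ℛ R y).convMul_apply, Finset.sum_mul, lTensor_antipode_tmul_mul, hP]
      using this
  calc (x ⊗ₜ 1) * P
      = (toConv (LinearMap.mulRight R P ∘ₗ ι₁) * (toConv (ι₂ ∘ₗ antipode R) * toConv ι₂)) x := by
        rw [algHom_comp_antipode_convMul_self, mul_one]; rfl
    _ = (toConv ((counit : H →ₗ[R] R).smulRight P) * toConv ι₂) x := by rw [← mul_assoc, hP_conv]
    _ = P * (1 ⊗ₜ x) := by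
        simp only [(ℛ R x).convMul_apply, LinearMap.smulRight_apply, AlgHom.toLinearMap_apply,
          Algebra.TensorProduct.includeRight_apply, smul_mul_assoc, ← mul_smul_comm,
          ← TensorProduct.tmul_smul, ← Finset.mul_sum, ← TensorProduct.tmul_sum, sum_counit_smul]

theorem lid_rTensor_mulLeft_lTensor_antipode_comul {lam : H →ₗ[R] R}
    (hΛ : IsLeftCointegral R Λ) (hlam : IsRightIntegral lam) (hnorm : lam Λ = 1) (z : H) :
    TensorProduct.lid R H ((lam ∘ₗ LinearMap.mulLeft R z).rTensor H
      ((antipode R).lTensor H (comul Λ))) = z := by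
  rw [← TensorProduct.lid_rTensor_tmul_one_mul, tmul_one_mul_lTensor_antipode_comul hΛ,
    TensorProduct.lid_rTensor_mul_one_tmul, TensorProduct.lid_rTensor_lTensor, hlam, hnorm,
    one_smul, antipode_one, one_mul]

theorem linearMap_comp_convMul_mulLeft_comul_comp_includeLeft {α : H →ₗ[R] R}
    (hα : ∀ h : H, Λ * antipode R h = α h • Λ) :
    toConv (Algebra.linearMap R (H ⊗[R] H) ∘ₗ α) *
        toConv (LinearMap.mulLeft R (comul Λ) ∘ₗ ι₁) =
      toConv (LinearMap.mulLeft R (comul Λ) ∘ₗ ι₂ ∘ₗ antipode R) := by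
  ext b
  have hα' (x : H) (y : H ⊗[R] H) :
      algebraMap R _ (α x) * (comul Λ * y) = comul Λ * (comul (antipode R x) * y) := by
    rw [← Algebra.smul_def, ← smul_mul_assoc, ← map_smul, ← hα, Bialgebra.comul_mul, mul_assoc]
  have hS := congr($(comul_comp_antipode_convMul_includeLeft (R := R) (H := H)) b)
  rw [(ℛ R b).convMul_apply] at hS ⊢
  simp only [LinearMap.comp_apply, Algebra.linearMap_apply, LinearMap.mulLeft_apply, hα',
    ← Finset.mul_sum]
  exact congrArg _ hS

theorem comul_mul_tmul_one_eq_sum (α : H →ₐ[R] R) (hα : ∀ h : H, Λ * antipode R h = α h • Λ)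
    {ι : Type*} {b : H} (rb : Repr R b ι) :
    comul (R := R) Λ * (b ⊗ₜ 1) = ∑ i ∈ rb.index,
      α (antipode R (rb.left i)) • (comul Λ * (1 ⊗ₜ antipode R (rb.right i))) := by
  let α' := (Algebra.ofId R (H ⊗[R] H)).comp α
  have h : toConv (LinearMap.mulLeft R (comul Λ) ∘ₗ ι₁) = toConv (α'.toLinearMap ∘ₗ antipode R) *
      toConv (LinearMap.mulLeft R (comul Λ) ∘ₗ ι₂ ∘ₗ antipode R) := by
    rw [← linearMap_comp_convMul_mulLeft_comul_comp_includeLeft (α := α.toLinearMap) hα,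
      ← mul_assoc, show Algebra.linearMap R (H ⊗[R] H) ∘ₗ α.toLinearMap = α'.toLinearMap from rfl,
      algHom_comp_antipode_convMul_self, one_mul]
  have hb := congr($h b)
  rw [rb.convMul_apply] at hb
  simpa [α', Algebra.smul_def] using hb

end General

section Field

variable {k H : Type*} [Field k] [Ring H] [HopfAlgebra k H] {Λ : H}

def distinguishedGrouplike {α : H →ₗ[k] k} (hΛ0 : Λ ≠ 0)
    (hα : ∀ h : H, Λ * antipode k h = α h • Λ) : H →ₐ[k] k :=
  AlgHom.ofLinearMap α
    (smul_left_injective k hΛ0 <| by simpa using (hα 1).symm)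
    (fun x y => smul_left_injective k hΛ0 <| show α (x * y) • Λ = (α x * α y) • Λ by
      rw [← hα, antipode_mul_antidistrib, ← mul_assoc, hα, smul_mul_assoc, hα, smul_smul,
        mul_comm])

variable [FiniteDimensional k H] {lam : H →ₗ[k] k}

theorem eq_zero_of_forall_integral_mul_eq_zero
    (hΛ : IsLeftCointegral k Λ) (hlam : IsRightIntegral lam) (hnorm : lam Λ = 1) {w : H}
    (hw : ∀ z, lam (z * w) = 0) : w = 0 := by
  let B : H →ₗ[k] Module.Dual k H := (LinearMap.mul k H).compr₂ lam
  have hB_inj : Function.Injective B := by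
    rw [← LinearMap.ker_eq_bot, LinearMap.ker_eq_bot']
    intro m hm
    have : lam ∘ₗ LinearMap.mulLeft k m = 0 := hm
    rw [← lid_rTensor_mulLeft_lTensor_antipode_comul hΛ hlam hnorm m, this]
    simp
  have hB_surj : Function.Surjective B :=
    (LinearMap.injective_iff_surjective_of_finrank_eq_finrank
      Subspace.dual_finrank_eq.symm).mp hB_inj
  refine (Module.forall_dual_apply_eq_zero_iff k w).mp fun φ => ?_
  obtain ⟨z, rfl⟩ := hB_surj φ
  exact hw z

theorem rid_lTensor_lTensor_antipode_comul
    (hΛ : IsLeftCointegral k Λ) (hlam : IsRightIntegral lam) (hnorm : lam Λ = 1) :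
    TensorProduct.rid k H (lam.lTensor H ((antipode k).lTensor H (comul Λ))) = 1 := by
  rw [← sub_eq_zero]
  refine eq_zero_of_forall_integral_mul_eq_zero hΛ hlam hnorm fun z => ?_
  have := TensorProduct.apply_lid_rTensor (lam ∘ₗ LinearMap.mulLeft k z)
    ((antipode k).lTensor H (comul Λ)) lam
  rw [lid_rTensor_mulLeft_lTensor_antipode_comul hΛ hlam hnorm] at this
  rw [mul_sub, mul_one, map_sub, this]
  exact sub_self _

end Field

end HopfAlgebra

/-- **Radford's formula.** Let `H` be a finite dimensional Hopf algebra over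
`k`, `λ` a right integral on `H` with `λ(Λ) = 1` for a left cointegral `Λ`, and `αH` the
distinguished grouplike element of `H*`.  Then for all `a b ∈ H`,
`λ(ab) = αH(S(b₍₁₎)) λ(S²(b₍₂₎) a)` (stated for every representation
`Δ b = ∑ b₁ᵢ ⊗ b₂ᵢ` of the coproduct of `b`). -/
theorem radford_formula_right_integral
    {k H : Type*} [Field k] [Ring H] [HopfAlgebra k H] [FiniteDimensional k H]
    (Λ : H) (hΛ0 : Λ ≠ 0)
    (hΛ : ∀ h : H, h * Λ = counit (R := k) h • Λ)
    (lam : H →ₗ[k] k)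
    (hlam : ∀ h : H,
      (TensorProduct.lid k H) ((lam.rTensor H) (comul (R := k) h)) = lam h • (1 : H))
    (hnorm : lam Λ = 1)
    (αH : H →ₗ[k] k)
    (hαH : ∀ L : H, (∀ h : H, h * L = counit (R := k) h • L) →
        ∀ h : H, L * HopfAlgebra.antipode (R := k) h = αH h • L) :
    ∀ (a b : H) (ι : Type) (s : Finset ι) (b1 b2 : ι → H),
      comul (R := k) b = ∑ i ∈ s, b1 i ⊗ₜ[k] b2 i →
      lam (a * b) =
        ∑ i ∈ s, αH (HopfAlgebra.antipode (R := k) (b1 i)) *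
          lam (HopfAlgebra.antipode (R := k) (HopfAlgebra.antipode (R := k) (b2 i)) * a) := by
  intro a b ι s b1 b2 hb
  let pairing : H ⊗[k] H →ₗ[k] k :=
    lam ∘ₗ (TensorProduct.lid k H).toLinearMap ∘ₗ (lam ∘ₗ LinearMap.mulLeft k a).rTensor H ∘ₗ
      (antipode k).lTensor H
  have h := congrArg pairing <| comul_mul_tmul_one_eq_sum (distinguishedGrouplike hΛ0 (hαH Λ hΛ))
    (hαH Λ hΛ) (⟨s, b1, b2, hb.symm⟩ : Repr k b ι)
  have hleft : pairing (comul Λ * (b ⊗ₜ 1)) = lam (a * b) := by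
    simp only [pairing, LinearMap.comp_apply, LinearEquiv.coe_coe, lTensor_antipode_mul_tmul]
    rw [antipode_one, ← Algebra.TensorProduct.one_def, one_mul, lid_rTensor_mul_tmul_one,
      apply_lid_rTensor, rid_lTensor_lTensor_antipode_comul hΛ hlam hnorm]
    simp
  have hright (y : H) : pairing (comul Λ * (1 ⊗ₜ y)) = lam (antipode k y * a) := by
    simp only [pairing, LinearMap.comp_apply, LinearEquiv.coe_coe, lTensor_antipode_mul_tmul]
    rw [← Algebra.TensorProduct.one_def, mul_one, lid_rTensor_one_tmul_mul,
      lid_rTensor_mulLeft_lTensor_antipode_comul hΛ hlam hnorm]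
  simpa [hleft, hright, distinguishedGrouplike] using h
end

section
/- Let H be a finite dimensional Hopf algebra with distinguished grouplike α_H ∈ H*, λ a right integral with λ(Λ)=1 for a left cointegral Λ. Then the map c : H** ⊗ H → k_α ⊗ H ⊗ H given by e_x ⊗ y ↦ λ(S(y₍₁₎)x) α_H(y₍₂₎) ⊗ y₍₃₎ ⊗ y₍₄₎ is H-linear, where H** carries the double-dual H-action h·e_x = e_{S²(h)x}, k_α is k with H-action via α_H, and H ⊗ H carries the diagonal left regular action. -/
/-!
The chromatic map factors as `x ⊗ y ↦ ∑ S(y₁) x ⊗ y₂` followed by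
`a ⊗ b ↦ λ(a) ∑ α(b₁) b₂ ⊗ b₃`. The first factor turns the double-dual action
`x ⊗ y ↦ ∑ S²(h₁) x ⊗ h₂ y` into left multiplication of the second leg by `h`, since
`∑ S(h₂) S²(h₁) ⊗ h₃ = 1 ⊗ h`. The second factor turns that into the `α`-twisted diagonal action,
since `α` is a character: `Λ S(h) = α(h) Λ` for the nonzero left integral `Λ`, and `S` is an
antihomomorphism.
-/

open Coalgebra TensorProduct

namespace TensorProduct

variable {R M₁ M₂ M₃ M₄ : Type*} [CommSemiring R] [AddCommMonoid M₁] [AddCommMonoid M₂]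
  [AddCommMonoid M₃] [AddCommMonoid M₄] [Module R M₁] [Module R M₂] [Module R M₃] [Module R M₄]

theorem exists_finset_sum_tmul_tmul_tmul_eq (T : M₁ ⊗[R] (M₂ ⊗[R] (M₃ ⊗[R] M₄))) :
    ∃ (ι : Type) (s : Finset ι) (a : ι → M₁) (b : ι → M₂) (c : ι → M₃) (d : ι → M₄),
      T = ∑ i ∈ s, a i ⊗ₜ (b i ⊗ₜ (c i ⊗ₜ d i)) := by
  obtain ⟨n, a, t, rfl⟩ := exists_sum_tmul_eq T
  choose n' b u hu using fun i ↦ exists_sum_tmul_eq (t i)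
  choose n'' c d hcd using fun i j ↦ exists_sum_tmul_eq (u i j)
  refine ⟨(i : Fin n) × (j : Fin (n' i)) × Fin (n'' i j), Finset.univ, fun x ↦ a x.1,
    fun x ↦ b x.1 x.2.1, fun x ↦ c x.1 x.2.1 x.2.2, fun x ↦ d x.1 x.2.1 x.2.2, ?_⟩
  simp [Fintype.sum_sigma, hu, hcd, tmul_sum]

end TensorProduct

namespace HopfAlgebra

section Character

variable {k A : Type*} [Field k] [Ring A] [HopfAlgebra k A] {Λ : A} {α : A →ₗ[k] k}

lemma map_one_of_mul_antipode_eq_smul (hΛ : Λ ≠ 0) (hα : ∀ a, Λ * antipode k a = α a • Λ) :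
    α 1 = 1 :=
  smul_left_injective k hΛ (by simpa using (hα 1).symm)

lemma map_mul_of_mul_antipode_eq_smul (hΛ : Λ ≠ 0) (hα : ∀ a, Λ * antipode k a = α a • Λ)
    (a b : A) : α (a * b) = α a * α b := by
  refine smul_left_injective k hΛ ?_
  calc α (a * b) • Λ = Λ * antipode k b * antipode k a := by
        rw [← hα, antipode_mul_antidistrib, mul_assoc]
    _ = (α a * α b) • Λ := by rw [hα, smul_mul_assoc, hα, smul_smul, mul_comm]

end Character

variable {R A ι : Type*} [CommSemiring R] [Semiring A] [HopfAlgebra R A]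

lemma sum_antipode_mul_antipode_antipode_eq_smul {a : A} (r : Repr R a ι) :
    ∑ i ∈ r.index, antipode R (r.right i) * antipode R (antipode R (r.left i)) =
      counit (R := R) a • (1 : A) := by
  simpa [map_sum, antipode_mul_antidistrib] using
    congr(antipode R $(sum_antipode_mul_eq_smul r))

lemma sum_sum_antipode_mul_antipode_antipode_tmul_eq {h : A} {κ : ι → Type*} (r : Repr R h ι)
    (r₂ : ∀ i, Repr R (r.right i) (κ i)) :
    ∑ i ∈ r.index, ∑ j ∈ (r₂ i).index,
      (antipode R ((r₂ i).left j) * antipode R (antipode R (r.left i))) ⊗ₜ[R] (r₂ i).right j =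
      1 ⊗ₜ h := by
  let Φ : A ⊗[R] (A ⊗[R] A) →ₗ[R] A ⊗[R] A :=
    (LinearMap.mul' R A ∘ₗ (TensorProduct.comm R A A).toLinearMap ∘ₗ
      map (antipode R ∘ₗ antipode R) (antipode R)).rTensor A ∘ₗ
      (TensorProduct.assoc R A A A).symm.toLinearMap
  have coassoc := congr(Φ $(sum_tmul_tmul_eq r (fun i ↦ ℛ R (r.left i)) r₂))
  simp only [Φ, map_sum, LinearMap.comp_apply, LinearEquiv.coe_coe,
    TensorProduct.assoc_symm_tmul, LinearMap.rTensor_tmul, TensorProduct.map_tmul, comm_tmul,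
    LinearMap.mul'_apply] at coassoc
  rw [← coassoc]
  simp only [← sum_tmul, sum_antipode_mul_antipode_antipode_eq_smul, smul_tmul, ← tmul_sum,
    sum_counit_smul]

variable (R A) in
/-- `x ⊗ y ↦ S(y₁) x ⊗ y₂`, the inverse of the Hopf–Galois map `x ⊗ y ↦ y₁ x ⊗ y₂`. -/
noncomputable def antipodeShear : A ⊗[R] A →ₗ[R] A ⊗[R] A :=
  (LinearMap.mul' R A ∘ₗ (TensorProduct.comm R A A).toLinearMap).rTensor A ∘ₗ
    (TensorProduct.assoc R A A A).symm.toLinearMap ∘ₗ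
    ((antipode R).rTensor A ∘ₗ comul).lTensor A

lemma antipodeShear_tmul (x : A) {y : A} (r : Repr R y ι) :
    antipodeShear R A (x ⊗ₜ y) = ∑ i ∈ r.index, (antipode R (r.left i) * x) ⊗ₜ r.right i := by
  simp [antipodeShear, ← r.eq, tmul_sum, map_sum]

lemma antipodeShear_comp_mulLeft (h : A) :
    antipodeShear R A ∘ₗ LinearMap.mulLeft R ((antipode R ∘ₗ antipode R).rTensor A (comul h)) =
      LinearMap.mulLeft R (1 ⊗ₜ h) ∘ₗ antipodeShear R A := by
  refine TensorProduct.ext' fun x y ↦ ?_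
  set rh := ℛ R h
  set ry := ℛ R y
  set r₂ := fun i ↦ ℛ R (rh.right i)
  have collapse := sum_sum_antipode_mul_antipode_antipode_tmul_eq rh r₂
  calc antipodeShear R A ((antipode R ∘ₗ antipode R).rTensor A (comul h) * x ⊗ₜ y)
      = ∑ i ∈ rh.index, ∑ p ∈ (r₂ i).index ×ˢ ry.index,
          (antipode R ((r₂ i).left p.1 * ry.left p.2) * (antipode R (antipode R (rh.left i)) * x))
            ⊗ₜ ((r₂ i).right p.1 * ry.right p.2) := by
        rw [← rh.eq]
        simp only [map_sum, Finset.sum_mul, LinearMap.rTensor_tmul,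
          Algebra.TensorProduct.tmul_mul_tmul]
        refine Finset.sum_congr rfl fun i _ ↦ ?_
        rw [antipodeShear_tmul _ ((r₂ i).mul ry)]
        rfl
    _ = ∑ j ∈ ry.index, (antipode R (ry.left j) ⊗ₜ 1) * (∑ i ∈ rh.index, ∑ i' ∈ (r₂ i).index,
          (antipode R ((r₂ i).left i') * antipode R (antipode R (rh.left i))) ⊗ₜ[R] (r₂ i).right i')
          * (x ⊗ₜ ry.right j) := by
        simp only [Finset.sum_product, Finset.mul_sum, Finset.sum_mul,
          Algebra.TensorProduct.tmul_mul_tmul, antipode_mul_antidistrib, mul_assoc, one_mul]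
        rw [Finset.sum_comm]
        refine Finset.sum_congr rfl fun i _ ↦ Finset.sum_comm
    _ = _ := by
        rw [collapse]
        simp [antipodeShear_tmul x ry, Algebra.TensorProduct.tmul_mul_tmul]

/-- `h ↦ ∑ χ(h₁) h₂ ⊗ h₃`: `h` acts on `k_χ ⊗ A ⊗ A` as left multiplication by this element. -/
noncomputable def twistedComul (χ : A →ₐ[R] R) : A →ₐ[R] A ⊗[R] A :=
  (Algebra.TensorProduct.lid R (A ⊗[R] A)).toAlgHom.comp
    ((Algebra.TensorProduct.map χ (Bialgebra.comulAlgHom R A)).comp (Bialgebra.comulAlgHom R A))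

lemma twistedComul_apply (χ : A →ₐ[R] R) (h : A) :
    twistedComul χ h =
      TensorProduct.lid R (A ⊗[R] A) (χ.toLinearMap.rTensor _ (comul.lTensor A (comul h))) := by
  simp [twistedComul, ← (ℛ R h).eq, map_sum]

/-- `x ⊗ y ↦ ∑ λ(S(y₁) x) χ(y₂) y₃ ⊗ y₄`. -/
noncomputable def chromaticMap (lam : A →ₗ[R] R) (χ : A →ₐ[R] R) : A ⊗[R] A →ₗ[R] A ⊗[R] A :=
  (TensorProduct.lid R (A ⊗[R] A)).toLinearMap ∘ₗ map lam (twistedComul χ).toLinearMap ∘ₗ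
    antipodeShear R A

lemma chromaticMap_tmul_eq_sum (lam : A →ₗ[R] R) (χ : A →ₐ[R] R) (x y : A) {s : Finset ι}
    {y₁ y₂ y₃ y₄ : ι → A}
    (hy : (comul.lTensor A).lTensor A (comul.lTensor A (comul y)) =
      ∑ i ∈ s, y₁ i ⊗ₜ[R] (y₂ i ⊗ₜ[R] (y₃ i ⊗ₜ[R] y₄ i))) :
    chromaticMap lam χ (x ⊗ₜ y) =
      ∑ i ∈ s, (lam (antipode R (y₁ i) * x) * χ (y₂ i)) • (y₃ i ⊗ₜ[R] y₄ i) := by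
  let Ψ : A ⊗[R] (A ⊗[R] (A ⊗[R] A)) →ₗ[R] A ⊗[R] A :=
    (TensorProduct.lid R (A ⊗[R] A)).toLinearMap ∘ₗ
      map (lam ∘ₗ LinearMap.mulRight R x ∘ₗ antipode R)
        ((TensorProduct.lid R (A ⊗[R] A)).toLinearMap ∘ₗ χ.toLinearMap.rTensor _)
  have hΨ : ∑ i ∈ s, (lam (antipode R (y₁ i) * x) * χ (y₂ i)) • (y₃ i ⊗ₜ[R] y₄ i) =
      Ψ (∑ i ∈ s, y₁ i ⊗ₜ[R] (y₂ i ⊗ₜ[R] (y₃ i ⊗ₜ[R] y₄ i))) := by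
    simp [Ψ, map_sum, smul_smul, mul_comm]
  rw [hΨ, ← hy, ← (ℛ R y).eq]
  simp [Ψ, chromaticMap, antipodeShear_tmul x (ℛ R y), twistedComul_apply, map_sum]

lemma chromaticMap_comp_mulLeft (lam : A →ₗ[R] R) (χ : A →ₐ[R] R) (h : A) :
    chromaticMap lam χ ∘ₗ
        LinearMap.mulLeft R ((antipode R ∘ₗ antipode R).rTensor A (comul h)) =
      LinearMap.mulLeft R (twistedComul χ h) ∘ₗ chromaticMap lam χ := by
  have pairing : (TensorProduct.lid R (A ⊗[R] A)).toLinearMap ∘ₗ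
        map lam (twistedComul χ).toLinearMap ∘ₗ LinearMap.mulLeft R (1 ⊗ₜ h) =
      LinearMap.mulLeft R (twistedComul χ h) ∘ₗ
        (TensorProduct.lid R (A ⊗[R] A)).toLinearMap ∘ₗ map lam (twistedComul χ).toLinearMap :=
    TensorProduct.ext' fun a b ↦ by simp
  simp only [chromaticMap, LinearMap.comp_assoc, antipodeShear_comp_mulLeft]
  simp only [← LinearMap.comp_assoc, pairing]

end HopfAlgebra

theorem left_chromatic_map_H_linear_general
    {k H : Type*} [Field k] [Ring H] [HopfAlgebra k H]
    (Λ : H) (hΛ0 : Λ ≠ 0)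
    (hΛ : ∀ h : H, h * Λ = counit (R := k) h • Λ)
    (lam : H →ₗ[k] k)
    (αH : H →ₗ[k] k)
    (hαH : ∀ L : H, (∀ h : H, h * L = counit (R := k) h • L) →
        ∀ h : H, L * HopfAlgebra.antipode (R := k) h = αH h • L)
    (c : H ⊗[k] H →ₗ[k] H ⊗[k] H)
    (hc : ∀ (x y : H) (ι : Type) (s : Finset ι) (y1 y2 y3 y4 : ι → H),
      (LinearMap.lTensor H (LinearMap.lTensor H (comul (R := k))))
          ((LinearMap.lTensor H (comul (R := k))) (comul (R := k) y)) =
        ∑ i ∈ s, y1 i ⊗ₜ[k] (y2 i ⊗ₜ[k] (y3 i ⊗ₜ[k] y4 i)) →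
      c (x ⊗ₜ[k] y) =
        ∑ i ∈ s, (lam (HopfAlgebra.antipode (R := k) (y1 i) * x) * αH (y2 i)) •
          (y3 i ⊗ₜ[k] y4 i)) :
    ∀ (h x y : H) (κ μ : Type) (t : Finset κ) (r : Finset μ)
      (p q : κ → H) (u v w : μ → H),
      comul (R := k) h = ∑ j ∈ t, p j ⊗ₜ[k] q j →
      (LinearMap.lTensor H (comul (R := k))) (comul (R := k) h) =
        ∑ l ∈ r, u l ⊗ₜ[k] (v l ⊗ₜ[k] w l) →
      c (∑ j ∈ t,
          (HopfAlgebra.antipode (R := k) (HopfAlgebra.antipode (R := k) (p j)) * x)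
            ⊗ₜ[k] (q j * y)) =
      ∑ l ∈ r, αH (u l) •
        TensorProduct.map (LinearMap.mulLeft k (v l)) (LinearMap.mulLeft k (w l))
          (c (x ⊗ₜ[k] y)) := by
  intro h x y κ μ t r p q u v w hpq huvw
  have hΛα := hαH Λ hΛ
  let χ : H →ₐ[k] k := AlgHom.ofLinearMap αH
    (HopfAlgebra.map_one_of_mul_antipode_eq_smul hΛ0 hΛα)
    (HopfAlgebra.map_mul_of_mul_antipode_eq_smul hΛ0 hΛα)
  have hc_eq : c = HopfAlgebra.chromaticMap lam χ := TensorProduct.ext' fun x y ↦ by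
    obtain ⟨ι, s, y₁, y₂, y₃, y₄, hy⟩ := exists_finset_sum_tmul_tmul_tmul_eq
      ((comul.lTensor H).lTensor H (comul.lTensor H (comul (R := k) y)))
    rw [hc x y ι s y₁ y₂ y₃ y₄ hy, HopfAlgebra.chromaticMap_tmul_eq_sum lam χ x y hy]
    rfl
  have source_action :
      ∑ j ∈ t, (HopfAlgebra.antipode k (HopfAlgebra.antipode k (p j)) * x) ⊗ₜ[k] (q j * y) =
        (HopfAlgebra.antipode k ∘ₗ HopfAlgebra.antipode k).rTensor H (comul h) * (x ⊗ₜ y) := by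
    simp [hpq, map_sum, Finset.sum_mul, Algebra.TensorProduct.tmul_mul_tmul]
  have target_action : ∀ z, ∑ l ∈ r, αH (u l) •
      TensorProduct.map (LinearMap.mulLeft k (v l)) (LinearMap.mulLeft k (w l)) z =
      HopfAlgebra.twistedComul χ h * z := by
    intro z
    simp [HopfAlgebra.twistedComul_apply, huvw, map_sum, Finset.sum_mul,
      ← LinearMap.mulLeft_tmul, χ]
  rw [source_action, target_action, hc_eq]
  exact LinearMap.congr_fun (HopfAlgebra.chromaticMap_comp_mulLeft lam χ h) (x ⊗ₜ y)

/-- Let `H` be a finite dimensional Hopf algebra with distinguished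
grouplike `αH ∈ H*`, `λ` a right integral with `λ(Λ) = 1` for a left cointegral `Λ`.
Then the map `c : H** ⊗ H → k_α ⊗ H ⊗ H`, `e_x ⊗ y ↦ λ(S(y₍₁₎)x) αH(y₍₂₎) ⊗ y₍₃₎ ⊗ y₍₄₎`
is `H`-linear, where `H**` carries the double-dual action `h·e_x = e_{S²(h₍₁₎)x}`
(so concretely `h·(e_x ⊗ y) = e_{S²(h₍₁₎)x} ⊗ h₍₂₎ y`), `k_α` is `k` with action via
`αH`, and `H ⊗ H` carries the diagonal left regular action.  Identifying `H** ≅ H` via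
`x ↦ e_x` and absorbing the `k_α` component as a scalar, `c` is modeled as a linear map
`H ⊗ H → H ⊗ H`. -/
theorem left_chromatic_map_H_linear
    {k H : Type*} [Field k] [Ring H] [HopfAlgebra k H] [FiniteDimensional k H]
    (Λ : H) (hΛ0 : Λ ≠ 0)
    (hΛ : ∀ h : H, h * Λ = counit (R := k) h • Λ)
    (lam : H →ₗ[k] k)
    (hlam : ∀ h : H,
      (TensorProduct.lid k H) ((lam.rTensor H) (comul (R := k) h)) = lam h • (1 : H))
    (hnorm : lam Λ = 1)
    (αH : H →ₗ[k] k)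
    (hαH : ∀ L : H, (∀ h : H, h * L = counit (R := k) h • L) →
        ∀ h : H, L * HopfAlgebra.antipode (R := k) h = αH h • L)
    (c : H ⊗[k] H →ₗ[k] H ⊗[k] H)
    (hc : ∀ (x y : H) (ι : Type) (s : Finset ι) (y1 y2 y3 y4 : ι → H),
      (LinearMap.lTensor H (LinearMap.lTensor H (comul (R := k))))
          ((LinearMap.lTensor H (comul (R := k))) (comul (R := k) y)) =
        ∑ i ∈ s, y1 i ⊗ₜ[k] (y2 i ⊗ₜ[k] (y3 i ⊗ₜ[k] y4 i)) →
      c (x ⊗ₜ[k] y) =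
        ∑ i ∈ s, (lam (HopfAlgebra.antipode (R := k) (y1 i) * x) * αH (y2 i)) •
          (y3 i ⊗ₜ[k] y4 i)) :
    ∀ (h x y : H) (κ μ : Type) (t : Finset κ) (r : Finset μ)
      (p q : κ → H) (u v w : μ → H),
      comul (R := k) h = ∑ j ∈ t, p j ⊗ₜ[k] q j →
      (LinearMap.lTensor H (comul (R := k))) (comul (R := k) h) =
        ∑ l ∈ r, u l ⊗ₜ[k] (v l ⊗ₜ[k] w l) →
      c (∑ j ∈ t,
          (HopfAlgebra.antipode (R := k) (HopfAlgebra.antipode (R := k) (p j)) * x)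
            ⊗ₜ[k] (q j * y)) =
      ∑ l ∈ r, αH (u l) •
        TensorProduct.map (LinearMap.mulLeft k (v l)) (LinearMap.mulLeft k (w l))
          (c (x ⊗ₜ[k] y)) :=
  left_chromatic_map_H_linear_general Λ hΛ0 hΛ lam αH hαH c hc
end

section
/- Let C be a finite tensor category with projective generator G and suppose the coend Z(α) = ∫^Y ⁎Y ⊗ α ⊗ Y exists. Then the morphism a_P = (id_P ⊗ eṽ_G ⊗ id_{Z(α)})(id_{P⊗G} ⊗ ∂_{α, G^∨}) : P ⊗ G ⊗ α ⊗ G^∨ → P ⊗ Z(α) is an epimorphism, for any object P. -/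
open CategoryTheory CategoryTheory.Limits MonoidalCategory

/-- The centralizer morphism `∂_{a,Y} = (id_Y ⊗ i_Y) ∘ (coev_Y ⊗ id_{a ⊗ Y})`
associated to a coend `(ZA, i)` of `Y ↦ ⁎Y ⊗ a ⊗ Y`. -/
noncomputable def centralizerPartial {C : Type*} [Category C] [MonoidalCategory C]
    [RightRigidCategory C] (a ZA : C)
    (i : ∀ Y : C, (Yᘁ ⊗ (a ⊗ Y)) ⟶ ZA) (Y : C) : a ⊗ Y ⟶ Y ⊗ ZA :=
  (λ_ (a ⊗ Y)).inv ≫ (η_ Y (Yᘁ) ▷ (a ⊗ Y)) ≫ (α_ Y (Yᘁ) (a ⊗ Y)).hom ≫ (Y ◁ i Y)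

section Helpers

variable {C : Type*} [Category C] [MonoidalCategory C]

/-- Tensoring on the left with an object admitting a left dual preserves epimorphisms. -/
lemma aP_aux_epi_whiskerLeft (P : C) [HasLeftDual P] {X Y : C} (h : X ⟶ Y) [Epi h] :
    Epi (P ◁ h) := by
  refine ⟨fun {W} u v huv => ?_⟩
  have h1 : h ≫ (tensorLeftHomEquiv Y (ᘁP) P W) u = h ≫ (tensorLeftHomEquiv Y (ᘁP) P W) v := by
    apply (tensorLeftHomEquiv X (ᘁP) P W).symm.injective
    rw [tensorLeftHomEquiv_symm_naturality, tensorLeftHomEquiv_symm_naturality,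
      Equiv.symm_apply_apply, Equiv.symm_apply_apply]
    exact huv
  exact (tensorLeftHomEquiv Y (ᘁP) P W).injective ((cancel_epi h).mp h1)

/-- Every morphism `Dᘁ ⟶ Yᘁ` is the right adjoint mate of some morphism `Y ⟶ D`. -/
lemma aP_aux_mate_surj {Y D : C} [HasRightDual Y] [HasRightDual D] (g : (Dᘁ : C) ⟶ (Yᘁ : C)) :
    ∃ f : Y ⟶ D, (fᘁ) = g := by
  set E : (Dᘁ : C) ⊗ Y ⟶ 𝟙_ C :=
    (tensorRightHomEquiv (Dᘁ : C) Y (Yᘁ) (𝟙_ C)).symm (g ≫ (λ_ _).inv) with hE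
  refine ⟨(tensorLeftHomEquiv Y D (Dᘁ) (𝟙_ C)) E ≫ (ρ_ D).hom, ?_⟩
  have step : ((Dᘁ : C) ◁ (ρ_ D).hom) ≫ ε_ D (Dᘁ) =
      (α_ (Dᘁ : C) D (𝟙_ C)).inv ≫ ε_ D (Dᘁ) ▷ 𝟙_ C ≫ (λ_ (𝟙_ C)).hom := by
    rw [unitors_equal, rightUnitor_naturality, whiskerLeft_rightUnitor, Category.assoc]
  have key : ((Dᘁ : C) ◁ ((tensorLeftHomEquiv Y D (Dᘁ) (𝟙_ C)) E ≫ (ρ_ D).hom)) ≫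
      ε_ D (Dᘁ) = E := by
    have h0 := (tensorLeftHomEquiv Y D (Dᘁ) (𝟙_ C)).left_inv E
    dsimp [tensorLeftHomEquiv] at h0
    rw [MonoidalCategory.whiskerLeft_comp, Category.assoc, step]
    exact h0
  have h1 := tensorRightHomEquiv_whiskerLeft_comp_evaluation
      ((tensorLeftHomEquiv Y D (Dᘁ) (𝟙_ C)) E ≫ (ρ_ D).hom)
  rw [key, hE, Equiv.apply_symm_apply] at h1
  exact ((cancel_mono (λ_ (Yᘁ : C)).inv).mp h1).symm

end Helpers

section EqOne

variable {C : Type*} [Category C] [MonoidalCategory C] [RightRigidCategory C]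

/-- Comparison isomorphism between `G` and the chosen right dual of `Y`, given an exact pairing
exhibiting `G` as a right dual of `Y`. -/
noncomputable def aPDualComparison (G Y : C) [ExactPairing Y G] : G ≅ (Yᘁ : C) :=
  rightDualIso ‹ExactPairing Y G› (inferInstance : ExactPairing Y (Yᘁ))

lemma aP_aux_eq_one (a ZA : C) (i : ∀ Y : C, (Yᘁ ⊗ (a ⊗ Y)) ⟶ ZA) (G Y : C) [ExactPairing Y G] :
    (G ◁ centralizerPartial a ZA i Y) ≫
      (α_ G Y ZA).inv ≫ (ε_ Y G ▷ ZA) ≫ (λ_ ZA).hom =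
    ((aPDualComparison G Y).hom ▷ (a ⊗ Y)) ≫ i Y := by
  calc
    _ = 𝟙 _ ⊗≫ G ◁ η_ Y (Yᘁ) ▷ (a ⊗ Y) ⊗≫
        ((G ⊗ Y) ◁ i Y ≫ ε_ Y G ▷ ZA) ⊗≫ 𝟙 _ := by
      dsimp [centralizerPartial]; monoidal
    _ = 𝟙 _ ⊗≫ G ◁ η_ Y (Yᘁ) ▷ (a ⊗ Y) ⊗≫
        (ε_ Y G ▷ ((Yᘁ : C) ⊗ (a ⊗ Y)) ≫ 𝟙_ C ◁ i Y) ⊗≫ 𝟙 _ := by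
      rw [whisker_exchange]
    _ = _ := by
      dsimp [aPDualComparison, rightDualIso, rightAdjointMate]
      monoidal

end EqOne

/-- Let `C` be a finite tensor category (a `k`-linear rigid monoidal
abelian category with enough projectives) with projective generator `G`, and suppose the
coend `Z α = ∫^Y ⁎Y ⊗ α ⊗ Y` exists (given by an object `ZA` together with a universal
dinatural transformation `i`).  Then for any object `P` the morphism
`a_P = (id_P ⊗ ẽv_G ⊗ id_{Z α}) ∘ (id_{P ⊗ G} ⊗ ∂_{α, G^∨}) : P ⊗ G ⊗ α ⊗ G^∨ ⟶ P ⊗ Z α`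
is an epimorphism, where `G^∨ = ᘁG` is the right dual of `G` with evaluation
`ẽv_G = ε_ : G ⊗ ᘁG ⟶ 𝟙`. -/
theorem aP_is_epi
    {k C : Type*} [Field k] [Category C] [Abelian C] [Linear k C]
    [MonoidalCategory C] [RigidCategory C] [EnoughProjectives C]
    [∀ X Y : C, FiniteDimensional k (X ⟶ Y)]
    -- G is a projective generator
    (G : C) [Projective G]
    (hGen : ∀ (M N : C) (u v : M ⟶ N), (∀ f : G ⟶ M, f ≫ u = f ≫ v) → u = v)
    -- the distinguished invertible object α and the coend Z(α)
    (a : C) (ha : ∃ b : C, Nonempty (a ⊗ b ≅ 𝟙_ C) ∧ Nonempty (b ⊗ a ≅ 𝟙_ C))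
    (ZA : C)
    (i : ∀ Y : C, (Yᘁ ⊗ (a ⊗ Y)) ⟶ ZA)
    (hdinat : ∀ {Y Y' : C} (f : Y ⟶ Y'),
      ((Y'ᘁ) ◁ (a ◁ f)) ≫ i Y' = ((fᘁ) ▷ (a ⊗ Y)) ≫ i Y)
    (huniv : ∀ (M : C) (j : ∀ Y : C, (Yᘁ ⊗ (a ⊗ Y)) ⟶ M),
      (∀ {Y Y' : C} (f : Y ⟶ Y'),
        ((Y'ᘁ) ◁ (a ◁ f)) ≫ j Y' = ((fᘁ) ▷ (a ⊗ Y)) ≫ j Y) →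
      ∃! r : ZA ⟶ M, ∀ Y : C, j Y = i Y ≫ r)
    (P : C) :
    Epi (P ◁ ((G ◁ centralizerPartial a ZA i (ᘁG)) ≫
      (α_ G (ᘁG) ZA).inv ≫ (ε_ ((ᘁG : C)) G ▷ ZA) ≫ (λ_ ZA).hom)) := by
  -- Step 1: `i (ᘁG)` is an epimorphism.
  have hepi : Epi (i (ᘁG)) := by
    refine ⟨fun {M} u v huv => ?_⟩
    have key : ∀ Y : C, i Y ≫ u = i Y ≫ v := by
      intro Y
      apply (tensorRightHomEquiv (Yᘁ : C) (a ⊗ Y) ((a ⊗ Y)ᘁ) M).injective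
      apply hGen
      intro g
      obtain ⟨f, hf⟩ := @aP_aux_mate_surj C _ _ Y (ᘁG) _ (RightRigidCategory.rightDual _)
        ((aPDualComparison G (ᘁG)).inv ≫ g)
      have hd := hdinat f
      rw [hf] at hd
      have base : ((((aPDualComparison G (ᘁG)).inv ≫ g)) ▷ (a ⊗ Y)) ≫ (i Y ≫ u)
          = ((((aPDualComparison G (ᘁG)).inv ≫ g)) ▷ (a ⊗ Y)) ≫ (i Y ≫ v) := by
        rw [← Category.assoc, ← hd, Category.assoc, huv, ← Category.assoc, hd,
          Category.assoc]
      have base' : ((aPDualComparison G (ᘁG)).inv ≫ g) ≫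
            (tensorRightHomEquiv (Yᘁ : C) (a ⊗ Y) ((a ⊗ Y)ᘁ) M) (i Y ≫ u)
          = ((aPDualComparison G (ᘁG)).inv ≫ g) ≫
            (tensorRightHomEquiv (Yᘁ : C) (a ⊗ Y) ((a ⊗ Y)ᘁ) M) (i Y ≫ v) := by
        apply (tensorRightHomEquiv _ (a ⊗ Y) ((a ⊗ Y)ᘁ) M).symm.injective
        rw [tensorRightHomEquiv_symm_naturality, tensorRightHomEquiv_symm_naturality,
          Equiv.symm_apply_apply, Equiv.symm_apply_apply]
        exact base
      have := congrArg (fun t => (aPDualComparison G (ᘁG)).hom ≫ t) base'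
      simpa using this
    obtain ⟨r, hr, huniq⟩ := huniv M (fun Y => i Y ≫ u)
      (fun {Y Y'} f => by rw [← Category.assoc, hdinat f, Category.assoc])
    rw [huniq u (fun Y => rfl), huniq v (fun Y => key Y)]
  -- Step 2: rewrite the morphism and conclude.
  rw [aP_aux_eq_one a ZA i G (ᘁG), MonoidalCategory.whiskerLeft_comp]
  haveI : IsIso ((aPDualComparison G (ᘁG : C)).hom ▷ (a ⊗ (ᘁG : C))) :=
    (whiskerRightIso (aPDualComparison G (ᘁG)) (a ⊗ (ᘁG : C))).isIso_hom
  haveI : IsIso (P ◁ ((aPDualComparison G (ᘁG : C)).hom ▷ (a ⊗ (ᘁG : C)))) :=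
    (whiskerLeftIso P (asIso ((aPDualComparison G (ᘁG : C)).hom ▷ (a ⊗ (ᘁG : C))))).isIso_hom
  haveI : Epi (P ◁ i (ᘁG)) := aP_aux_epi_whiskerLeft P (i (ᘁG))
  exact epi_comp _ _
end

section
/- Let H be a finite dimensional Hopf algebra, c^l_H : H** ⊗ H → α ⊗ H ⊗ H a left chromatic map based at H for H, and P a finite dimensional projective H-module with H-linear maps fᵢ : P → H, gᵢ : H → P satisfying Σᵢ gᵢ fᵢ = id_P. Then c^l_P = Σᵢ (id_{α⊗H} ⊗ gᵢ) ∘ c^l_H ∘ (id_{H**} ⊗ fᵢ) is a left chromatic map based at P for H, i.e. (id_X ⊗ ev_H ⊗ id_P)(Λ^l_{X ⊗ ⁎H} ⊗ id_{H⊗P})(id_{X⊗⁎H} ⊗ c^l_P)(id_X ⊗ coev_{⁎H} ⊗ id_P) = id_{X⊗P} for all H-modules X. -/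
open CategoryTheory MonoidalCategory

variable {C : Type*} [Category C] [MonoidalCategory C]

/-- The left chromatic composite
`(id_X ⊗ ev ⊗ id_P) ∘ (Λ^l_{X ⊗ ⁎H} ⊗ id_{H ⊗ P}) ∘ (id_{X ⊗ ⁎H} ⊗ c) ∘ (id_X ⊗ coev ⊗ id_P)`
(with all structural isomorphisms made explicit) associated to a candidate left chromatic
map `c : H** ⊗ P ⟶ α ⊗ (H ⊗ P)` in the category of `H`-modules, abstracted to an
arbitrary monoidal category: `Hd` plays the role of `⁎H`, `Hdd` of `H** = (⁎H)*`,
`Hobj` of `H`, `aH` of `α`, `ev : ⁎H ⊗ H ⟶ 𝟙`, `coev : 𝟙 ⟶ ⁎H ⊗ H**`, and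
`Lam M : M ⊗ α ⟶ M` is the natural transformation `Λ^l`. -/
def leftChromaticComposite (Hd Hdd Hobj aH : C)
    (ev : Hd ⊗ Hobj ⟶ 𝟙_ C) (coev : 𝟙_ C ⟶ Hd ⊗ Hdd)
    (Lam : ∀ M : C, M ⊗ aH ⟶ M)
    (P : C) (c : Hdd ⊗ P ⟶ aH ⊗ (Hobj ⊗ P)) (X : C) : X ⊗ P ⟶ X ⊗ P :=
  (X ◁ ((λ_ P).inv ≫ (coev ▷ P) ≫ (α_ Hd Hdd P).hom ≫ (Hd ◁ c))) ≫
  (X ◁ (α_ Hd aH (Hobj ⊗ P)).inv) ≫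
  (α_ X (Hd ⊗ aH) (Hobj ⊗ P)).inv ≫
  ((α_ X Hd aH).inv ▷ (Hobj ⊗ P)) ≫
  (Lam (X ⊗ Hd) ▷ (Hobj ⊗ P)) ≫
  (α_ (X ⊗ Hd) Hobj P).inv ≫
  ((α_ X Hd Hobj).hom ▷ P) ≫
  ((X ◁ ev) ▷ P) ≫
  ((ρ_ X).hom ▷ P)

lemma leftChromaticComposite_conj (Hd Hdd Hobj aH : C)
    (ev : Hd ⊗ Hobj ⟶ 𝟙_ C) (coev : 𝟙_ C ⟶ Hd ⊗ Hdd)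
    (Lam : ∀ M : C, M ⊗ aH ⟶ M)
    (cH : Hdd ⊗ Hobj ⟶ aH ⊗ (Hobj ⊗ Hobj))
    (P : C) (fi : P ⟶ Hobj) (gi : Hobj ⟶ P) (X : C) :
    leftChromaticComposite Hd Hdd Hobj aH ev coev Lam P
        ((Hdd ◁ fi) ≫ cH ≫ (aH ◁ (Hobj ◁ gi))) X
      = (X ◁ fi) ≫ leftChromaticComposite Hd Hdd Hobj aH ev coev Lam Hobj cH X ≫
          (X ◁ gi) := by
  have hfi : (X ◁ (λ_ P).inv) ≫ (X ◁ coev ▷ P) ≫ (X ◁ (α_ Hd Hdd P).hom) ≫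
        (X ◁ Hd ◁ Hdd ◁ fi)
      = (X ◁ fi) ≫ (X ◁ (λ_ Hobj).inv) ≫ (X ◁ coev ▷ Hobj) ≫
        (X ◁ (α_ Hd Hdd Hobj).hom) := by
    simp only [← MonoidalCategory.whiskerLeft_comp]
    congr 1
    rw [← associator_naturality_right, ← whisker_exchange_assoc,
      leftUnitor_inv_naturality_assoc]
  have hgi : (X ◁ Hd ◁ aH ◁ Hobj ◁ gi) ≫
        (X ◁ (α_ Hd aH (Hobj ⊗ P)).inv) ≫
        (α_ X (Hd ⊗ aH) (Hobj ⊗ P)).inv ≫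
        (α_ (X ⊗ Hd ⊗ aH) Hobj P).inv ≫
        ((α_ X Hd aH).inv ▷ Hobj ▷ P) ≫
        (Lam (X ⊗ Hd) ▷ Hobj ▷ P) ≫
        ((α_ X Hd Hobj).hom ▷ P) ≫
        (α_ X (Hd ⊗ Hobj) P).hom ≫
        (X ◁ ev ▷ P) ≫ (X ◁ (λ_ P).hom)
      = ((X ◁ (α_ Hd aH (Hobj ⊗ Hobj)).inv) ≫
        (α_ X (Hd ⊗ aH) (Hobj ⊗ Hobj)).inv ≫
        (α_ (X ⊗ Hd ⊗ aH) Hobj Hobj).inv ≫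
        ((α_ X Hd aH).inv ▷ Hobj ▷ Hobj) ≫
        (Lam (X ⊗ Hd) ▷ Hobj ▷ Hobj) ≫
        ((α_ X Hd Hobj).hom ▷ Hobj) ≫
        (α_ X (Hd ⊗ Hobj) Hobj).hom ≫
        (X ◁ ev ▷ Hobj) ≫ (X ◁ (λ_ Hobj).hom)) ≫ (X ◁ gi) := by
    rw [← MonoidalCategory.whiskerLeft_comp_assoc, associator_inv_naturality_right,
      MonoidalCategory.whiskerLeft_comp_assoc, associator_inv_naturality_right_assoc,
      associator_inv_naturality_right_assoc, whisker_exchange_assoc,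
      whisker_exchange_assoc, whisker_exchange_assoc, associator_naturality_right_assoc,
      ← MonoidalCategory.whiskerLeft_comp_assoc, whisker_exchange,
      MonoidalCategory.whiskerLeft_comp_assoc, ← MonoidalCategory.whiskerLeft_comp,
      leftUnitor_naturality, MonoidalCategory.whiskerLeft_comp]
    simp only [Category.assoc]
  simp only [leftChromaticComposite, MonoidalCategory.whiskerLeft_comp, Category.assoc,
    MonoidalCategory.comp_whiskerRight, MonoidalCategory.whiskerRight_tensor,
    MonoidalCategory.whiskerLeft_rightUnitor, MonoidalCategory.associator_conjugation]
  simp [leftChromaticComposite]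
  rw [reassoc_of% hfi, hgi]
  simp only [Category.assoc]

/-- Let `H` be a finite dimensional Hopf algebra,
`c^l_H : H** ⊗ H ⟶ α ⊗ H ⊗ H` a left chromatic map based at `H` for `H`, and `P` a
finite dimensional projective `H`-module with `H`-linear maps `fᵢ : P ⟶ H`,
`gᵢ : H ⟶ P` satisfying `∑ᵢ gᵢ ∘ fᵢ = id_P`.  Then
`c^l_P = ∑ᵢ (id_{α ⊗ H} ⊗ gᵢ) ∘ c^l_H ∘ (id_{H**} ⊗ fᵢ)` is a left chromatic map based
at `P` for `H`:  the composite
`(id_X ⊗ ev_H ⊗ id_P)(Λ^l_{X ⊗ ⁎H} ⊗ id_{H ⊗ P})(id_{X ⊗ ⁎H} ⊗ c^l_P)(id_X ⊗ coev_{⁎H} ⊗ id_P)`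
is the identity of `X ⊗ P` for every `H`-module `X`.  (Stated in the monoidal category
`C` of `H`-modules, with the relevant objects and structure morphisms abstracted.) -/
theorem chromatic_map_transfer_along_retraction
    [Preadditive C] [MonoidalPreadditive C]
    (Hd Hdd Hobj aH : C)
    (ev : Hd ⊗ Hobj ⟶ 𝟙_ C) (coev : 𝟙_ C ⟶ Hd ⊗ Hdd)
    (Lam : ∀ M : C, M ⊗ aH ⟶ M)
    (cH : Hdd ⊗ Hobj ⟶ aH ⊗ (Hobj ⊗ Hobj))
    (hcH : ∀ X : C,
      leftChromaticComposite Hd Hdd Hobj aH ev coev Lam Hobj cH X = 𝟙 (X ⊗ Hobj))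
    (P : C) (ι : Type) (s : Finset ι)
    (f : ι → (P ⟶ Hobj)) (g : ι → (Hobj ⟶ P))
    (hfg : ∑ i ∈ s, f i ≫ g i = 𝟙 P) :
    ∀ X : C,
      leftChromaticComposite Hd Hdd Hobj aH ev coev Lam P
        (∑ i ∈ s, (Hdd ◁ f i) ≫ cH ≫ (aH ◁ (Hobj ◁ g i))) X = 𝟙 (X ⊗ P) := by
  intro X
  have lin : leftChromaticComposite Hd Hdd Hobj aH ev coev Lam P
        (∑ i ∈ s, (Hdd ◁ f i) ≫ cH ≫ (aH ◁ (Hobj ◁ g i))) X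
      = ∑ i ∈ s, leftChromaticComposite Hd Hdd Hobj aH ev coev Lam P
        ((Hdd ◁ f i) ≫ cH ≫ (aH ◁ (Hobj ◁ g i))) X := by
    simp [leftChromaticComposite, whiskerLeft_sum,
      Preadditive.sum_comp, Preadditive.comp_sum]
  rw [lin]
  calc ∑ i ∈ s, leftChromaticComposite Hd Hdd Hobj aH ev coev Lam P
        ((Hdd ◁ f i) ≫ cH ≫ (aH ◁ (Hobj ◁ g i))) X
      = ∑ i ∈ s, (X ◁ f i) ≫ (𝟙 (X ⊗ Hobj)) ≫ (X ◁ g i) := by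
        refine Finset.sum_congr rfl fun i _ => ?_
        rw [leftChromaticComposite_conj, hcH]
    _ = 𝟙 (X ⊗ P) := by
        simp only [Category.id_comp, ← MonoidalCategory.whiskerLeft_comp,
          ← whiskerLeft_sum, hfg, MonoidalCategory.whiskerLeft_id]
end
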